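/- The Legendre–Fenchel transform Φ* is strictly convex on the relative (intrinsic) interior of conv S: for all x ≠ y in the relative interior of conv S and all 0 < λ < 1, Φ*(λx + (1−λ)y) < λΦ*(x) + (1−λ)Φ*(y). -/

import Mathlib

open scoped RealInnerProductSpace

/-- The logarithmic moment generating function Φ(v) = log Σ_{δ∈Δ} w(δ) e^{⟨v,δ⟩}. -/
noncomputable def logMGF {d : ℕ} (Δ : Finset (EuclideanSpace ℝ (Fin d)))
    (w : EuclideanSpace ℝ (Fin d) → ℝ) (v : EuclideanSpace ℝ (Fin d)) : ℝ :=
  Real.log (∑ δ ∈ Δ, w δ * Real.exp ⟪v, δ⟫)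

/-- The Legendre–Fenchel transform Φ*(x) = sup_{v∈ℝ^d} (⟨v,x⟩ − Φ(v)), valued in
(−∞,∞]. -/
noncomputable def logMGFStar {d : ℕ} (Δ : Finset (EuclideanSpace ℝ (Fin d)))
    (w : EuclideanSpace ℝ (Fin d) → ℝ) (x : EuclideanSpace ℝ (Fin d)) : EReal :=
  ⨆ v : EuclideanSpace ℝ (Fin d), ((⟪v, x⟫ - logMGF Δ w v : ℝ) : EReal)

/-! For `x` in the relative interior of `conv S`, the objective `v ↦ ⟪v, x⟫ - Φ v` is invariant
under translations orthogonal to the affine span of `S` and, along that span, decays at least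
linearly (since `Φ v ≥ log w δ + ⟪v, δ⟫` and some `δ ∈ S` sticks out of `x` in every direction),
so its supremum `Φ* x` is attained; averaging the decay bounds at `x` and `y` gives one at
`z = a x + b y`. For a maximiser `v` of the objective at `z`, `Φ* z = a (⟪v, x⟫ - Φ v) + b (⟪v, y⟫ - Φ v) ≤ a Φ* x + b Φ* y`; equality would make `v` a
critical point of both objectives, i.e. `x = ∇Φ v = y`. -/

open Filter Set

theorem exists_add_mem_of_mem_intrinsicInterior {E : Type*} [NormedAddCommGroup E]
    [NormedSpace ℝ E] {s : Set E} {x : E}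
    (hx : x ∈ intrinsicInterior ℝ s) :
    ∃ r > 0, ∀ p ∈ (affineSpan ℝ s).direction, ‖p‖ ≤ r → x + p ∈ s := by
  obtain ⟨⟨x, hxA⟩, hx', rfl⟩ := hx
  obtain ⟨r, hr, hball⟩ := Metric.mem_nhds_iff.mp (mem_interior_iff_mem_nhds.mp hx')
  refine ⟨r / 2, half_pos hr, fun p hp hpr => ?_⟩
  have hmem : x + p ∈ affineSpan ℝ s := by
    simpa [vadd_eq_add, add_comm] using AffineSubspace.vadd_mem_of_mem_direction hp hxA
  exact hball (a := ⟨x + p, hmem⟩) (by simp [Subtype.dist_eq, dist_eq_norm]; linarith)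

theorem tendsto_cocompact_atBot_of_le_sub_mul_norm {E : Type*} [NormedAddCommGroup E]
    [ProperSpace E] {F : E → ℝ} {c C : ℝ} (hc : 0 < c) (hF : ∀ p, F p ≤ C - c * ‖p‖) :
    Tendsto F (cocompact E) atBot := by
  refine tendsto_atBot_mono (fun p => (hF p).trans_eq (sub_eq_add_neg _ _))
    (tendsto_atBot_add_const_left _ C ?_)
  exact tendsto_neg_atTop_atBot.comp (tendsto_norm_cocompact_atTop.const_mul_atTop hc)

section InnerProductSpace

variable {E : Type*} [NormedAddCommGroup E] [InnerProductSpace ℝ E]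

theorem exists_mul_norm_le_inner_sub_of_mem_intrinsicInterior {s : Set E} {x : E}
    (hx : x ∈ intrinsicInterior ℝ (convexHull ℝ s)) :
    ∃ c > 0, ∀ p ∈ (affineSpan ℝ s).direction, ∃ δ ∈ s, c * ‖p‖ ≤ ⟪p, δ - x⟫ := by
  obtain ⟨r, hr, hball⟩ := exists_add_mem_of_mem_intrinsicInterior hx
  refine ⟨r, hr, fun p hp => ?_⟩
  rcases eq_or_ne p 0 with rfl | hp0
  · obtain ⟨δ, hδ⟩ := convexHull_nonempty_iff.mp ⟨x, intrinsicInterior_subset hx⟩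
    exact ⟨δ, hδ, by simp⟩
  have hu : x + (r / ‖p‖) • p ∈ convexHull ℝ s := by
    refine hball _ (Submodule.smul_mem _ _ (by rwa [affineSpan_convexHull])) ?_
    rw [norm_smul, Real.norm_of_nonneg (by positivity),
      div_mul_cancel₀ _ (norm_ne_zero_iff.mpr hp0)]
  obtain ⟨δ, hδ, hle⟩ :=
    ((innerₛₗ ℝ p).convexOn convex_univ).exists_ge_of_mem_convexHull (subset_univ s) hu
  simp only [innerₛₗ_apply_apply, inner_add_right, real_inner_smul_right] at hle
  refine ⟨δ, hδ, ?_⟩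
  calc r * ‖p‖ = r / ‖p‖ * ⟪p, p⟫ := by
        rw [real_inner_self_eq_norm_sq]
        field_simp
    _ ≤ ⟪p, δ - x⟫ := by
        rw [inner_sub_right]
        linarith

theorem exists_forall_ge_of_orthogonal_invariant [FiniteDimensional ℝ E] {F : E → ℝ}
    (hF : Continuous F) (V : Submodule ℝ E) (hinv : ∀ u, ∀ q ∈ Vᗮ, F (u + q) = F u)
    {c C : ℝ} (hc : 0 < c) (hbd : ∀ p ∈ V, F p ≤ C - c * ‖p‖) :
    ∃ v, ∀ u, F u ≤ F v := by
  obtain ⟨v, hv⟩ := (hF.comp continuous_subtype_val : Continuous fun p : V => F p)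
    |>.exists_forall_ge (tendsto_cocompact_atBot_of_le_sub_mul_norm hc fun p => hbd p p.2)
  refine ⟨v, fun u => ?_⟩
  obtain ⟨p, hp, q, hq, rfl⟩ := V.exists_add_mem_mem_orthogonal u
  rw [hinv p q hq]
  exact hv ⟨p, hp⟩

theorem inner_smul_add_smul_sub {a b : ℝ} (hab : a + b = 1) (f : E → ℝ) (x y u : E) :
    ⟪u, a • x + b • y⟫ - f u = a * (⟪u, x⟫ - f u) + b * (⟪u, y⟫ - f u) := by
  rw [inner_add_right, real_inner_smul_right, real_inner_smul_right]
  linear_combination f u * hab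

theorem inner_eq_fderiv_of_isLocalMax {f : E → ℝ} {v x : E} (hf : DifferentiableAt ℝ f v)
    (hx : IsLocalMax (fun u => ⟪u, x⟫ - f u) v) (e : E) : ⟪e, x⟫ = fderiv ℝ f v e := by
  have hderiv : HasFDerivAt (fun u => ⟪u, x⟫ - f u) (innerSL ℝ x - fderiv ℝ f v) v := by
    simp_rw [real_inner_comm x]
    exact (innerSL ℝ x).hasFDerivAt.sub hf.hasFDerivAt
  have := congr($(hx.hasFDerivAt_eq_zero hderiv) e)
  simpa [real_inner_comm, sub_eq_zero] using this

theorem inner_smul_add_smul_sub_lt {f : E → ℝ} {v x y : E} {a b Mx My : ℝ}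
    (hf : DifferentiableAt ℝ f v) (hxy : x ≠ y) (ha : 0 < a) (hb : 0 < b) (hab : a + b = 1)
    (hMx : ∀ u, ⟪u, x⟫ - f u ≤ Mx) (hMy : ∀ u, ⟪u, y⟫ - f u ≤ My) :
    ⟪v, a • x + b • y⟫ - f v < a * Mx + b * My := by
  rw [inner_smul_add_smul_sub hab]
  rcases (hMx v).lt_or_eq with hx | hx
  · nlinarith [hMy v]
  rcases (hMy v).lt_or_eq with hy | hy
  · nlinarith [hMx v]
  refine absurd (ext_inner_left ℝ fun e => ?_) hxy
  rw [inner_eq_fderiv_of_isLocalMax hf (Eventually.of_forall fun u => (hMx u).trans hx.ge),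
    inner_eq_fderiv_of_isLocalMax hf (Eventually.of_forall fun u => (hMy u).trans hy.ge)]

end InnerProductSpace

section LogMGF

variable {d : ℕ} {Δ : Finset (EuclideanSpace ℝ (Fin d))} {w : EuclideanSpace ℝ (Fin d) → ℝ}

def weightSupport (Δ : Finset (EuclideanSpace ℝ (Fin d))) (w : EuclideanSpace ℝ (Fin d) → ℝ) :
    Set (EuclideanSpace ℝ (Fin d)) :=
  {δ | δ ∈ Δ ∧ 0 < w δ}

theorem sum_mul_exp_inner_pos (hw : ∀ δ ∈ Δ, 0 ≤ w δ) (hwpos : 0 < ∑ δ ∈ Δ, w δ)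
    (v : EuclideanSpace ℝ (Fin d)) : 0 < ∑ δ ∈ Δ, w δ * Real.exp ⟪v, δ⟫ := by
  obtain ⟨δ, hδ, hpos⟩ := Finset.exists_lt_of_sum_lt (f := fun _ => (0 : ℝ)) (by simpa using hwpos)
  exact Finset.sum_pos' (fun δ hδ => mul_nonneg (hw δ hδ) (Real.exp_pos _).le)
    ⟨δ, hδ, mul_pos hpos (Real.exp_pos _)⟩

theorem differentiable_logMGF (hw : ∀ δ ∈ Δ, 0 ≤ w δ) (hwpos : 0 < ∑ δ ∈ Δ, w δ) :
    Differentiable ℝ (logMGF Δ w) :=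
  Differentiable.log (Differentiable.fun_sum fun δ _ =>
    ((differentiable_id.inner ℝ (differentiable_const δ)).exp).const_mul (w δ))
    fun v => (sum_mul_exp_inner_pos hw hwpos v).ne'

theorem log_add_inner_le_logMGF (hw : ∀ δ ∈ Δ, 0 ≤ w δ) (v : EuclideanSpace ℝ (Fin d))
    {δ : EuclideanSpace ℝ (Fin d)} (hδ : δ ∈ Δ) (hpos : 0 < w δ) :
    Real.log (w δ) + ⟪v, δ⟫ ≤ logMGF Δ w v := by
  rw [← Real.log_exp ⟪v, δ⟫, ← Real.log_mul hpos.ne' (Real.exp_pos _).ne']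
  exact Real.log_le_log (by positivity)
    (Finset.single_le_sum (fun δ hδ => mul_nonneg (hw δ hδ) (Real.exp_pos _).le) hδ)

theorem logMGF_add_of_mem_orthogonal (hw : ∀ δ ∈ Δ, 0 ≤ w δ) (hwpos : 0 < ∑ δ ∈ Δ, w δ)
    {x : EuclideanSpace ℝ (Fin d)} (hx : x ∈ affineSpan ℝ (weightSupport Δ w))
    (u : EuclideanSpace ℝ (Fin d)) {q : EuclideanSpace ℝ (Fin d)}
    (hq : q ∈ (affineSpan ℝ (weightSupport Δ w)).directionᗮ) :
    logMGF Δ w (u + q) = ⟪q, x⟫ + logMGF Δ w u := by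
  have hterm : ∀ δ ∈ Δ,
      w δ * Real.exp ⟪u + q, δ⟫ = Real.exp ⟪q, x⟫ * (w δ * Real.exp ⟪u, δ⟫) := by
    intro δ hδ
    rcases (hw δ hδ).eq_or_lt with h0 | h0
    · simp [← h0]
    have hδx : δ - x ∈ (affineSpan ℝ (weightSupport Δ w)).direction :=
      AffineSubspace.vsub_mem_direction (subset_affineSpan ℝ _ ⟨hδ, h0⟩) hx
    have hqδ : ⟪q, δ⟫ = ⟪q, x⟫ := by
      rw [← sub_eq_zero, ← inner_sub_right]
      exact Submodule.inner_left_of_mem_orthogonal hδx hq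
    rw [inner_add_left, hqδ, Real.exp_add]
    ring
  rw [logMGF, logMGF, Finset.sum_congr rfl hterm, ← Finset.mul_sum,
    Real.log_mul (Real.exp_pos _).ne' (sum_mul_exp_inner_pos hw hwpos u).ne', Real.log_exp]

theorem exists_inner_sub_logMGF_le_sub_mul_norm (hw : ∀ δ ∈ Δ, 0 ≤ w δ)
    {x : EuclideanSpace ℝ (Fin d)}
    (hx : x ∈ intrinsicInterior ℝ (convexHull ℝ (weightSupport Δ w))) :
    ∃ c > 0, ∃ C, ∀ p ∈ (affineSpan ℝ (weightSupport Δ w)).direction,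
      ⟪p, x⟫ - logMGF Δ w p ≤ C - c * ‖p‖ := by
  obtain ⟨c, hc, hsupp⟩ := exists_mul_norm_le_inner_sub_of_mem_intrinsicInterior hx
  refine ⟨c, hc, ∑ δ ∈ Δ, |Real.log (w δ)|, fun p hp => ?_⟩
  obtain ⟨δ, ⟨hδ, hδpos⟩, hle⟩ := hsupp p hp
  have hlog : -Real.log (w δ) ≤ ∑ δ ∈ Δ, |Real.log (w δ)| :=
    (neg_le_abs _).trans <|
      Finset.single_le_sum (f := fun δ => |Real.log (w δ)|) (fun δ _ => abs_nonneg _) hδ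
  have := log_add_inner_le_logMGF hw p hδ hδpos
  rw [inner_sub_right] at hle
  linarith

theorem exists_forall_inner_sub_logMGF_le (hw : ∀ δ ∈ Δ, 0 ≤ w δ) (hwpos : 0 < ∑ δ ∈ Δ, w δ)
    {x : EuclideanSpace ℝ (Fin d)} (hx : x ∈ affineSpan ℝ (weightSupport Δ w)) {c C : ℝ}
    (hc : 0 < c) (hbd : ∀ p ∈ (affineSpan ℝ (weightSupport Δ w)).direction,
      ⟪p, x⟫ - logMGF Δ w p ≤ C - c * ‖p‖) :
    ∃ v, ∀ u, ⟪u, x⟫ - logMGF Δ w u ≤ ⟪v, x⟫ - logMGF Δ w v := by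
  refine exists_forall_ge_of_orthogonal_invariant
    ((continuous_id.inner continuous_const).sub (differentiable_logMGF hw hwpos).continuous) _
    (fun u q hq => ?_) hc hbd
  rw [logMGF_add_of_mem_orthogonal hw hwpos hx u hq, inner_add_left]
  ring

theorem logMGFStar_eq_of_forall_le {x v : EuclideanSpace ℝ (Fin d)}
    (hv : ∀ u, ⟪u, x⟫ - logMGF Δ w u ≤ ⟪v, x⟫ - logMGF Δ w v) :
    logMGFStar Δ w x = ((⟪v, x⟫ - logMGF Δ w v : ℝ) : EReal) :=
  le_antisymm (iSup_le fun u => EReal.coe_le_coe_iff.mpr (hv u))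
    (le_iSup (fun u => ((⟪u, x⟫ - logMGF Δ w u : ℝ) : EReal)) v)

end LogMGF

theorem logMGFStar_strictly_convex_on_relint_general (d : ℕ)
    (Δ : Finset (EuclideanSpace ℝ (Fin d)))
    (w : EuclideanSpace ℝ (Fin d) → ℝ) (hw : ∀ δ ∈ Δ, 0 ≤ w δ)
    (hwpos : 0 < ∑ δ ∈ Δ, w δ) :
    ∀ x ∈ intrinsicInterior ℝ
        (convexHull ℝ {δ : EuclideanSpace ℝ (Fin d) | δ ∈ Δ ∧ 0 < w δ}),
      ∀ y ∈ intrinsicInterior ℝ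
        (convexHull ℝ {δ : EuclideanSpace ℝ (Fin d) | δ ∈ Δ ∧ 0 < w δ}),
      x ≠ y → ∀ a b : ℝ, 0 < a → 0 < b → a + b = 1 →
        logMGFStar Δ w (a • x + b • y) <
          (a : EReal) * logMGFStar Δ w x + (b : EReal) * logMGFStar Δ w y := by
  intro x hx y hy hxy a b ha hb hab
  have hspan : ∀ z ∈ intrinsicInterior ℝ (convexHull ℝ (weightSupport Δ w)),
      z ∈ affineSpan ℝ (weightSupport Δ w) :=
    fun z hz => convexHull_subset_affineSpan _ (intrinsicInterior_subset hz)
  obtain ⟨cx, hcx, Cx, hbx⟩ := exists_inner_sub_logMGF_le_sub_mul_norm hw hx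
  obtain ⟨cy, hcy, Cy, hby⟩ := exists_inner_sub_logMGF_le_sub_mul_norm hw hy
  have hbz : ∀ p ∈ (affineSpan ℝ (weightSupport Δ w)).direction,
      ⟪p, a • x + b • y⟫ - logMGF Δ w p ≤ (a * Cx + b * Cy) - (a * cx + b * cy) * ‖p‖ := by
    intro p hp
    rw [inner_smul_add_smul_sub hab]
    nlinarith [hbx p hp, hby p hp]
  obtain ⟨vx, hvx⟩ := exists_forall_inner_sub_logMGF_le hw hwpos (hspan x hx) hcx hbx
  obtain ⟨vy, hvy⟩ := exists_forall_inner_sub_logMGF_le hw hwpos (hspan y hy) hcy hby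
  obtain ⟨vz, hvz⟩ := exists_forall_inner_sub_logMGF_le hw hwpos
    ((affineSpan ℝ _).convex (hspan x hx) (hspan y hy) ha.le hb.le hab) (by positivity) hbz
  rw [logMGFStar_eq_of_forall_le hvx, logMGFStar_eq_of_forall_le hvy,
    logMGFStar_eq_of_forall_le hvz, ← EReal.coe_mul, ← EReal.coe_mul, ← EReal.coe_add,
    EReal.coe_lt_coe_iff]
  exact inner_smul_add_smul_sub_lt (differentiable_logMGF hw hwpos vz) hxy ha hb hab hvx hvy

/-- Φ* is strictly convex on the relative (intrinsic) interior of
conv S, where S = {δ ∈ Δ : w(δ) > 0} is the support of the weights. -/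
theorem logMGFStar_strictly_convex_on_relint (d : ℕ) (hd : 1 ≤ d)
    (Δ : Finset (EuclideanSpace ℝ (Fin d))) (hΔ : Δ.Nonempty)
    (w : EuclideanSpace ℝ (Fin d) → ℝ) (hw : ∀ δ ∈ Δ, 0 ≤ w δ)
    (hwpos : 0 < ∑ δ ∈ Δ, w δ) :
    ∀ x ∈ intrinsicInterior ℝ
        (convexHull ℝ {δ : EuclideanSpace ℝ (Fin d) | δ ∈ Δ ∧ 0 < w δ}),
      ∀ y ∈ intrinsicInterior ℝ
        (convexHull ℝ {δ : EuclideanSpace ℝ (Fin d) | δ ∈ Δ ∧ 0 < w δ}),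
      x ≠ y → ∀ a b : ℝ, 0 < a → 0 < b → a + b = 1 →
        logMGFStar Δ w (a • x + b • y) <
          (a : EReal) * logMGFStar Δ w x + (b : EReal) * logMGFStar Δ w y :=
  logMGFStar_strictly_convex_on_relint_general d Δ w hw hwpos
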